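/- arXiv:1401.1792 — 6 statements merged into one kernel-verified Lean document; each statement's English description precedes it below -/
import Mathlib

section
/- (Lemma B.2.) Let E be a finite-dimensional real normed vector space, Q ⊆ E a nonempty closed convex set, l : E → ℝ an affine function, ρ ≥ 2 and μ > 0. For x ∈ E define λ*_μ(x) = sup_{y∈Q} { l(y) − (μ/2)‖y − x‖^ρ }. Then for any points x̄, ȳ ∈ E with ‖x̄ − ȳ‖ ≤ r̄ and any b > 0: λ*_μ(x̄) ≤ λ*_{(1+b)^{1−ρ}μ}(ȳ) + (μ/(2 b^{ρ−1})) r̄^ρ. -/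
noncomputable section

open Real Set

/-!
Writing `a + r` as the convex combination of `(1 + b) a` and `(1 + b) r / b` with weights
`1 / (1 + b)` and `b / (1 + b)`, convexity of `t ↦ t ^ ρ` and the triangle inequality give,
for every `y`, `(1 + b) ^ (1 - ρ) ‖y - ȳ‖ ^ ρ ≤ ‖y - x̄‖ ^ ρ + r̄ ^ ρ / b ^ (ρ - 1)`.
Multiplying by `μ / 2` and passing to suprema over `Q` gives the claim; the supremum on the
right is finite because the penalty of order `ρ > 1` beats the linear growth of `l`.
-/

lemma one_add_rpow_mul_add_rpow_le {p a r b : ℝ} (hp : 1 ≤ p) (ha : 0 ≤ a) (hr : 0 ≤ r)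
    (hb : 0 < b) : (1 + b) ^ (1 - p) * (a + r) ^ p ≤ a ^ p + r ^ p / b ^ (p - 1) := by
  have hb1 : 0 < 1 + b := by linarith
  have hconv := (convexOn_rpow hp).2 (mem_Ici.2 (by positivity : 0 ≤ (1 + b) * a))
    (mem_Ici.2 (by positivity : 0 ≤ (1 + b) / b * r)) (by positivity : 0 ≤ 1 / (1 + b))
    (by positivity : 0 ≤ b / (1 + b)) (by field_simp)
  have hcomb : 1 / (1 + b) * ((1 + b) * a) + b / (1 + b) * ((1 + b) / b * r) = a + r := by
    field_simp
  simp only [smul_eq_mul, hcomb, mul_rpow hb1.le ha, mul_rpow (div_pos hb1 hb).le hr,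
    div_rpow hb1.le hb.le] at hconv
  have hB : (1 + b) ^ (1 - p) = (1 + b) / (1 + b) ^ p := by
    rw [rpow_sub hb1, rpow_one]
  have hβ : b ^ (p - 1) = b ^ p / b := by rw [rpow_sub_one hb.ne']
  have hBpos : 0 < (1 + b) ^ p := rpow_pos_of_pos hb1 p
  have hβpos : 0 < b ^ p := rpow_pos_of_pos hb p
  calc (1 + b) ^ (1 - p) * (a + r) ^ p
      ≤ (1 + b) ^ (1 - p) * (1 / (1 + b) * ((1 + b) ^ p * a ^ p)
          + b / (1 + b) * ((1 + b) ^ p / b ^ p * r ^ p)) :=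
        mul_le_mul_of_nonneg_left hconv (by positivity)
    _ = a ^ p + r ^ p / b ^ (p - 1) := by
      rw [hB, hβ]
      field_simp

lemma one_add_rpow_mul_dist_rpow_le {X : Type*} [PseudoMetricSpace X] {p b : ℝ} (hp : 1 ≤ p)
    (hb : 0 < b) (x y z : X) :
    (1 + b) ^ (1 - p) * dist x z ^ p ≤ dist x y ^ p + dist y z ^ p / b ^ (p - 1) :=
  calc (1 + b) ^ (1 - p) * dist x z ^ p
      ≤ (1 + b) ^ (1 - p) * (dist x y + dist y z) ^ p := by
        gcongr
        exact dist_triangle x y z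
    _ ≤ dist x y ^ p + dist y z ^ p / b ^ (p - 1) :=
        one_add_rpow_mul_add_rpow_le hp dist_nonneg dist_nonneg hb

/-- Beyond `T = (C / c) ^ (ρ - 1)⁻¹` the term `c t ^ ρ` dominates `C t`. -/
lemma mul_sub_mul_rpow_le {C c ρ t : ℝ} (hC : 0 ≤ C) (hc : 0 < c) (hρ : 1 < ρ) (ht : 0 ≤ t) :
    C * t - c * t ^ ρ ≤ C * (C / c) ^ (ρ - 1)⁻¹ := by
  set T := (C / c) ^ (ρ - 1)⁻¹
  have hρ1 : 0 < ρ - 1 := sub_pos.2 hρ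
  rcases le_or_gt t T with htT | hTt
  · have : 0 ≤ c * t ^ ρ := by positivity
    nlinarith [mul_le_mul_of_nonneg_left htT hC]
  · have hT : 0 ≤ T := by positivity
    have hpow : C / c ≤ t ^ (ρ - 1) := by
      calc C / c = T ^ (ρ - 1) := (rpow_inv_rpow (by positivity) hρ1.ne').symm
        _ ≤ t ^ (ρ - 1) := by gcongr
    have hsplit : t ^ ρ = t ^ (ρ - 1) * t := by
      rw [rpow_sub_one (hT.trans_lt hTt).ne']
      field_simp [(hT.trans_lt hTt).ne']
    have hCt : C * t ≤ c * t ^ ρ := by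
      rw [hsplit, ← mul_assoc]
      gcongr
      rwa [div_le_iff₀' hc] at hpow
    nlinarith [mul_nonneg hC hT]

lemma bddAbove_range_sub_mul_norm_sub_rpow {E : Type*} [NormedAddCommGroup E] [NormedSpace ℝ E]
    (l : E →ᵃ[ℝ] ℝ) (hl : Continuous l.linear) {c ρ : ℝ} (hc : 0 < c) (hρ : 1 < ρ) (z : E) :
    BddAbove (range fun y => l y - c * ‖y - z‖ ^ ρ) := by
  set L : E →L[ℝ] ℝ := ⟨l.linear, hl⟩
  refine ⟨l z + ‖L‖ * (‖L‖ / c) ^ (ρ - 1)⁻¹, forall_mem_range.2 fun y => ?_⟩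
  have hl_eq : l y = l z + L (y - z) := by
    have := l.linearMap_vsub y z
    simp only [vsub_eq_sub] at this
    simp only [L, ContinuousLinearMap.coe_mk', this]
    ring
  have hLy : L (y - z) ≤ ‖L‖ * ‖y - z‖ := (le_abs_self _).trans (L.le_opNorm _)
  have := mul_sub_mul_rpow_le (norm_nonneg L) hc hρ (norm_nonneg (y - z))
  linarith

lemma csSup_image_le_csSup_image_add {α : Type*} {f g : α → ℝ} {s : Set α} {c : ℝ}
    (hs : s.Nonempty) (hg : BddAbove (g '' s)) (hfg : ∀ x ∈ s, f x ≤ g x + c) :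
    sSup (f '' s) ≤ sSup (g '' s) + c :=
  csSup_le (hs.image f) <| forall_mem_image.2 fun x hx =>
    (hfg x hx).trans (add_le_add_left (le_csSup hg (mem_image_of_mem g hx)) c)

theorem lambda_star_shift_general
    {E : Type*} [NormedAddCommGroup E] [NormedSpace ℝ E] [FiniteDimensional ℝ E]
    (Q : Set E) (hQne : Q.Nonempty)
    (l : E →ᵃ[ℝ] ℝ) (ρ μ : ℝ) (hρ : 2 ≤ ρ) (hμ : 0 < μ)
    (xbar ybar : E) (rbar : ℝ) (hr : ‖xbar - ybar‖ ≤ rbar)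
    (b : ℝ) (hb : 0 < b) :
    sSup ((fun y => l y - (μ / 2) * ‖y - xbar‖ ^ ρ) '' Q) ≤
      sSup ((fun y => l y - ((1 + b) ^ (1 - ρ) * μ / 2) * ‖y - ybar‖ ^ ρ) '' Q) +
        μ / (2 * b ^ (ρ - 1)) * rbar ^ ρ := by
  have hbdd := bddAbove_range_sub_mul_norm_sub_rpow l (LinearMap.continuous_of_finiteDimensional _)
    (by positivity : 0 < (1 + b) ^ (1 - ρ) * μ / 2) (by linarith : 1 < ρ) ybar
  refine csSup_image_le_csSup_image_add hQne (hbdd.mono (image_subset_range _ _)) fun y _ => ?_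
  have hshift : (1 + b) ^ (1 - ρ) * ‖y - ybar‖ ^ ρ ≤ ‖y - xbar‖ ^ ρ + rbar ^ ρ / b ^ (ρ - 1) := by
    have := one_add_rpow_mul_dist_rpow_le (by linarith : 1 ≤ ρ) hb y xbar ybar
    simp only [dist_eq_norm] at this
    exact this.trans (by gcongr)
  have hcoef : μ / (2 * b ^ (ρ - 1)) * rbar ^ ρ = μ / 2 * (rbar ^ ρ / b ^ (ρ - 1)) := by ring
  linarith [mul_le_mul_of_nonneg_left hshift (by positivity : 0 ≤ μ / 2)]

/-- Lemma B.2. For `λ*_μ(x) = sup_{y∈Q} { l(y) − (μ/2)‖y−x‖^ρ }`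
with `l` affine, `ρ ≥ 2`, `μ > 0`, and any `x̄, ȳ` with `‖x̄ − ȳ‖ ≤ r̄`, `b > 0`:
`λ*_μ(x̄) ≤ λ*_{(1+b)^{1−ρ}μ}(ȳ) + (μ/(2b^{ρ−1})) r̄^ρ`. -/
theorem lambda_star_shift
    {E : Type*} [NormedAddCommGroup E] [NormedSpace ℝ E] [FiniteDimensional ℝ E]
    (Q : Set E) (hQne : Q.Nonempty) (hQc : IsClosed Q) (hQconv : Convex ℝ Q)
    (l : E →ᵃ[ℝ] ℝ) (ρ μ : ℝ) (hρ : 2 ≤ ρ) (hμ : 0 < μ)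
    (xbar ybar : E) (rbar : ℝ) (hr : ‖xbar - ybar‖ ≤ rbar)
    (b : ℝ) (hb : 0 < b) :
    sSup ((fun y => l y - (μ / 2) * ‖y - xbar‖ ^ ρ) '' Q) ≤
      sSup ((fun y => l y - ((1 + b) ^ (1 - ρ) * μ / 2) * ‖y - ybar‖ ^ ρ) '' Q) +
        μ / (2 * b ^ (ρ - 1)) * rbar ^ ρ :=
  lambda_star_shift_general Q hQne l ρ μ hρ hμ xbar ybar rbar hr b hb
end
end

section
/- (Lemma B.3.) Let E be a finite-dimensional real normed vector space, Q ⊆ E a closed convex set, ȳ ∈ Q, l : E → ℝ an affine function, ρ ≥ 2, μ > 0, and r̄ > 0. For r ≥ 0 define ψ(r) = max{ l(x) : x ∈ Q, ‖x − ȳ‖ ≤ r } (the maximum exists since the feasible set is compact and nonempty), and define λ*_μ(ȳ) = sup_{y∈Q} { l(y) − (μ/2)‖y − ȳ‖^ρ }. Then λ*_μ(ȳ) ≤ ψ(r̄) + ((ρ−1)/ρ) (2/(μρ))^{1/(ρ−1)} ( (ψ(r̄) − ψ(0))/r̄ )^{ρ/(ρ−1)}. -/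
/-!
Along the segment from `ȳ` to a point `y ∈ Q` outside the ball of radius `r̄`, the affine (or just
concave) function `l` can grow at most with the slope `s = (ψ(r̄) - ψ(0)) / r̄` it has up to the
sphere, so `l y ≤ ψ(r̄) + s ‖y - ȳ‖` on all of `Q`. Young's inequality
`s r ≤ (ρ-1)/ρ (2/(μρ))^{1/(ρ-1)} s^{ρ/(ρ-1)} + (μ/2) r^ρ` then absorbs the linear term into
the penalty `(μ/2) ‖y - ȳ‖^ρ`.
-/

theorem young_inequality_half_mul_rpow {s r ρ μ : ℝ} (hs : 0 ≤ s) (hr : 0 ≤ r) (hρ : 1 < ρ)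
    (hμ : 0 < μ) :
    s * r ≤ (ρ - 1) / ρ * (2 / (μ * ρ)) ^ (1 / (ρ - 1)) * s ^ (ρ / (ρ - 1)) + μ / 2 * r ^ ρ := by
  have hρ0 : 0 < ρ := by linarith
  have hρ1 : 0 < ρ - 1 := by linarith
  set c := 2 / (μ * ρ) with hc_def
  have hc : 0 < c := by positivity
  have hconj : (ρ / (ρ - 1)).HolderConjugate ρ := by
    rw [Real.holderConjugate_iff]
    exact ⟨by rw [lt_div_iff₀ hρ1]; linarith, by field_simp; ring⟩
  -- rescale the factors by `c ^ (1 / ρ)` so that the unweighted Young inequality applies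
  have young := Real.young_inequality_of_nonneg (a := s * c ^ (1 / ρ)) (b := r / c ^ (1 / ρ))
    (by positivity) (by positivity) hconj
  have hprod : s * c ^ (1 / ρ) * (r / c ^ (1 / ρ)) = s * r := by
    field_simp [(by positivity : c ^ (1 / ρ) ≠ 0)]
  have hleft : (s * c ^ (1 / ρ)) ^ (ρ / (ρ - 1)) = s ^ (ρ / (ρ - 1)) * c ^ (1 / (ρ - 1)) := by
    rw [Real.mul_rpow hs (by positivity), ← Real.rpow_mul hc.le]
    congr 2
    field_simp
  have hright : (r / c ^ (1 / ρ)) ^ ρ = r ^ ρ / c := by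
    rw [Real.div_rpow hr (by positivity), ← Real.rpow_mul hc.le, one_div,
      inv_mul_cancel₀ hρ0.ne', Real.rpow_one]
  rw [hprod, hleft, hright] at young
  calc s * r ≤ s ^ (ρ / (ρ - 1)) * c ^ (1 / (ρ - 1)) / (ρ / (ρ - 1)) + r ^ ρ / c / ρ := young
    _ = _ := by rw [hc_def]; field_simp

theorem AffineMap.concaveOn {E : Type*} [AddCommGroup E] [Module ℝ E] (l : E →ᵃ[ℝ] ℝ)
    {Q : Set E} (hQ : Convex ℝ Q) : ConcaveOn ℝ Q l :=
  ⟨hQ, fun _ _ _ _ _ _ _ _ hab => (Convex.combo_affine_apply hab).ge⟩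

section ConcaveGrowth

variable {E : Type*} [NormedAddCommGroup E] [NormedSpace ℝ E] {Q : Set E} {f : E → ℝ}
  {ybar y : E} {rbar M : ℝ}

theorem ConcaveOn.sub_le_of_le_norm_sub (hf : ConcaveOn ℝ Q f) (hybar : ybar ∈ Q)
    (hrbar : 0 < rbar) (hM : ∀ x ∈ Q ∩ Metric.closedBall ybar rbar, f x ≤ M) (hy : y ∈ Q)
    (hfar : rbar ≤ ‖y - ybar‖) :
    f y - f ybar ≤ (M - f ybar) / rbar * ‖y - ybar‖ := by
  set r := ‖y - ybar‖
  have hr : 0 < r := hrbar.trans_le hfar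
  set t := rbar / r
  have ht : 0 < t := by positivity
  have ht1 : t ≤ 1 := (div_le_one hr).2 hfar
  have htr : t * r = rbar := div_mul_cancel₀ _ hr.ne'
  have hz : (1 - t) • ybar + t • y ∈ Q ∩ Metric.closedBall ybar rbar := by
    refine ⟨hf.1 hybar hy (by linarith) ht.le (by ring), ?_⟩
    rw [Metric.mem_closedBall, dist_eq_norm,
      show (1 - t) • ybar + t • y - ybar = t • (y - ybar) by module, norm_smul,
      Real.norm_of_nonneg ht.le, htr]
  have hconc : (1 - t) * f ybar + t * f y ≤ f ((1 - t) • ybar + t • y) :=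
    hf.2 hybar hy (by linarith) ht.le (by ring)
  have hslope : t * (f y - f ybar) ≤ M - f ybar := by linarith [hM _ hz]
  rw [div_mul_eq_mul_div, le_div_iff₀ hrbar, ← htr, ← mul_assoc]
  nlinarith

theorem ConcaveOn.le_add_mul_norm_sub (hf : ConcaveOn ℝ Q f) (hybar : ybar ∈ Q)
    (hrbar : 0 < rbar) (hM : ∀ x ∈ Q ∩ Metric.closedBall ybar rbar, f x ≤ M) (hy : y ∈ Q) :
    f y ≤ M + (M - f ybar) / rbar * ‖y - ybar‖ := by
  have hcenter := hM ybar ⟨hybar, Metric.mem_closedBall_self hrbar.le⟩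
  have hslope : 0 ≤ (M - f ybar) / rbar * ‖y - ybar‖ :=
    mul_nonneg (div_nonneg (by linarith) hrbar.le) (norm_nonneg _)
  rcases le_or_gt ‖y - ybar‖ rbar with hnear | hfar
  · linarith [hM y ⟨hy, by rwa [Metric.mem_closedBall, dist_eq_norm]⟩]
  · linarith [hf.sub_le_of_le_norm_sub hybar hrbar hM hy hfar.le]

end ConcaveGrowth

theorem lambda_star_psi_bound_general
    {E : Type*} [NormedAddCommGroup E] [NormedSpace ℝ E]
    (Q : Set E) (hQconv : Convex ℝ Q)
    (ybar : E) (hybar : ybar ∈ Q)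
    (l : E →ᵃ[ℝ] ℝ) (ρ μ : ℝ) (hρ : 2 ≤ ρ) (hμ : 0 < μ)
    (rbar : ℝ) (hrbar : 0 < rbar)
    (ψ : ℝ → ℝ)
    (hψ : ∀ r : ℝ, 0 ≤ r →
      IsGreatest ((fun x => l x) '' (Q ∩ Metric.closedBall ybar r)) (ψ r)) :
    sSup ((fun y => l y - (μ / 2) * ‖y - ybar‖ ^ ρ) '' Q) ≤
      ψ rbar + ((ρ - 1) / ρ) * (2 / (μ * ρ)) ^ (1 / (ρ - 1)) *
        ((ψ rbar - ψ 0) / rbar) ^ (ρ / (ρ - 1)) := by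
  have hψ0 : ψ 0 = l ybar := by
    obtain ⟨x, ⟨-, hx⟩, hlx⟩ := (hψ 0 le_rfl).1
    rw [Metric.closedBall_zero, Set.mem_singleton_iff] at hx
    rw [← hlx, hx]
  have hψrbar : ∀ x ∈ Q ∩ Metric.closedBall ybar rbar, l x ≤ ψ rbar :=
    fun x hx => (hψ rbar hrbar.le).2 ⟨x, hx, rfl⟩
  have hslope : 0 ≤ (ψ rbar - ψ 0) / rbar := by
    have := hψrbar ybar ⟨hybar, Metric.mem_closedBall_self hrbar.le⟩
    exact div_nonneg (by linarith) hrbar.le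
  refine csSup_le ⟨_, ybar, hybar, rfl⟩ ?_
  rintro _ ⟨y, hy, rfl⟩
  have hgrowth := (l.concaveOn hQconv).le_add_mul_norm_sub hybar hrbar hψrbar hy
  have hyoung := young_inequality_half_mul_rpow hslope (norm_nonneg (y - ybar))
    (by linarith : 1 < ρ) hμ
  rw [← hψ0] at hgrowth
  dsimp only
  linarith

/-- Lemma B.3. With `ψ(r) = max{ l(x) : x ∈ Q, ‖x−ȳ‖ ≤ r }`
and `λ*_μ(ȳ) = sup_{y∈Q}{ l(y) − (μ/2)‖y−ȳ‖^ρ }`, one has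
`λ*_μ(ȳ) ≤ ψ(r̄) + ((ρ−1)/ρ)(2/(μρ))^{1/(ρ−1)}((ψ(r̄)−ψ(0))/r̄)^{ρ/(ρ−1)}`. -/
theorem lambda_star_psi_bound
    {E : Type*} [NormedAddCommGroup E] [NormedSpace ℝ E] [FiniteDimensional ℝ E]
    (Q : Set E) (hQc : IsClosed Q) (hQconv : Convex ℝ Q)
    (ybar : E) (hybar : ybar ∈ Q)
    (l : E →ᵃ[ℝ] ℝ) (ρ μ : ℝ) (hρ : 2 ≤ ρ) (hμ : 0 < μ)
    (rbar : ℝ) (hrbar : 0 < rbar)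
    (ψ : ℝ → ℝ)
    (hψ : ∀ r : ℝ, 0 ≤ r →
      IsGreatest ((fun x => l x) '' (Q ∩ Metric.closedBall ybar r)) (ψ r)) :
    sSup ((fun y => l y - (μ / 2) * ‖y - ybar‖ ^ ρ) '' Q) ≤
      ψ rbar + ((ρ - 1) / ρ) * (2 / (μ * ρ)) ^ (1 / (ρ - 1)) *
        ((ψ rbar - ψ 0) / rbar) ^ (ρ / (ρ - 1)) :=
  lambda_star_psi_bound_general Q hQconv ybar hybar l ρ μ hρ hμ rbar hrbar ψ hψ
end

section
/- (Corollary B.1.) Let E be a finite-dimensional real normed vector space, Q ⊆ E a closed convex set, ȳ ∈ Q, l : E → ℝ affine, ρ ≥ 2, μ > 0, r̄ > 0, and let x̄ ∈ Q with ‖x̄ − ȳ‖ ≤ r̄. Define ψ(r) = max{ l(x) : x ∈ Q, ‖x − ȳ‖ ≤ r } for r ≥ 0 and λ*_μ(x̄) = sup_{y∈Q} { l(y) − (μ/2)‖y − x̄‖^ρ }. Then for every b > 0: λ*_μ(x̄) ≤ ψ(r̄) + (1+b) ((ρ−1)/ρ) (2/(μρ))^{1/(ρ−1)} ( (ψ(r̄)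 − ψ(0))/r̄ )^{ρ/(ρ−1)} + (μ/(2 b^{ρ−1})) r̄^ρ. -/
/-!
Write `Δ = (ψ(r̄) - ψ(0)) / r̄`. Since `l` is affine and `Q` convex, comparing `l y` with the value
of `l` where the segment `[ȳ, y]` leaves the ball of radius `r̄` gives
`l y ≤ ψ(r̄) + Δ ‖y - ȳ‖` on all of `Q`. Young's inequality with the weight `μ / (1+b)^(ρ-1)`
bounds `Δ ‖y - ȳ‖` by `(1+b) (ρ-1)/ρ (2/(μρ))^(1/(ρ-1)) Δ^(ρ/(ρ-1))` plus
`μ / (2 (1+b)^(ρ-1)) ‖y - ȳ‖^ρ`, and the weighted triangle inequality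
`‖y - ȳ‖^ρ ≤ (1+b)^(ρ-1) ‖y - x̄‖^ρ + (1+1/b)^(ρ-1) ‖x̄ - ȳ‖^ρ` splits the latter into the
penalty `(μ/2) ‖y - x̄‖^ρ` and a term at most `μ / (2 b^(ρ-1)) r̄^ρ`.
-/

/-- Young's inequality `a r ≤ r^ρ/ρ + a^q/q` applied to `(c^{1/ρ} r) (c^{-1/ρ} a)` with
`c = μρ/2`. -/
theorem young_inequality_weighted {ρ μ a r : ℝ} (hρ : 1 < ρ) (hμ : 0 < μ) (ha : 0 ≤ a)
    (hr : 0 ≤ r) :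
    a * r ≤ μ / 2 * r ^ ρ + (ρ - 1) / ρ * (2 / (μ * ρ)) ^ (1 / (ρ - 1)) * a ^ (ρ / (ρ - 1)) := by
  have hρ0 : 0 < ρ := by linarith
  have hq : (ρ / (ρ - 1))⁻¹ = (ρ - 1) / ρ := inv_div _ _
  have hpq : ρ.HolderConjugate (ρ / (ρ - 1)) :=
    Real.holderConjugate_iff.mpr ⟨hρ, by rw [hq]; field_simp; ring⟩
  set c : ℝ := μ * ρ / 2 with hc_def
  have hc : 0 < c := by positivity
  have young := Real.young_inequality_of_nonneg (a := r * c ^ (1 / ρ)) (b := a * c ^ (-(1 / ρ)))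
    (by positivity) (by positivity) hpq
  have hprod : r * c ^ (1 / ρ) * (a * c ^ (-(1 / ρ))) = a * r := by
    rw [mul_mul_mul_comm, ← Real.rpow_add hc, add_neg_cancel, Real.rpow_zero, mul_one, mul_comm]
  have hfirst : (r * c ^ (1 / ρ)) ^ ρ / ρ = μ / 2 * r ^ ρ := by
    rw [Real.mul_rpow hr (by positivity), ← Real.rpow_mul hc.le, one_div_mul_cancel hρ0.ne',
      Real.rpow_one, hc_def]
    field_simp
  have hsecond : (a * c ^ (-(1 / ρ))) ^ (ρ / (ρ - 1)) / (ρ / (ρ - 1)) =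
      (ρ - 1) / ρ * (2 / (μ * ρ)) ^ (1 / (ρ - 1)) * a ^ (ρ / (ρ - 1)) := by
    have hexp : -(1 / ρ) * (ρ / (ρ - 1)) = -(1 / (ρ - 1)) := by field_simp
    have hcinv : c⁻¹ = 2 / (μ * ρ) := by rw [hc_def, inv_div]
    rw [Real.mul_rpow ha (by positivity), ← Real.rpow_mul hc.le, hexp, Real.rpow_neg hc.le,
      ← Real.inv_rpow hc.le, hcinv, div_eq_mul_inv _ (ρ / (ρ - 1)), hq]
    ring
  rwa [hprod, hfirst, hsecond] at young

/-- Convexity of `x ↦ x^ρ` at the point `s + t = (1+b)⁻¹ ((1+b) s) + b (1+b)⁻¹ ((1+b⁻¹) t)`. -/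
theorem rpow_add_le_weighted_rpow_add_rpow {ρ b s t : ℝ} (hρ : 1 ≤ ρ) (hb : 0 < b) (hs : 0 ≤ s)
    (ht : 0 ≤ t) :
    (s + t) ^ ρ ≤ (1 + b) ^ (ρ - 1) * s ^ ρ + (1 + b⁻¹) ^ (ρ - 1) * t ^ ρ := by
  have hb1 : 0 < 1 + b := by linarith
  have hb1' : 0 < 1 + b⁻¹ := by positivity
  have hconv := (convexOn_rpow hρ).2 (Set.mem_Ici.2 (by positivity : 0 ≤ (1 + b) * s))
    (Set.mem_Ici.2 (by positivity : 0 ≤ (1 + b⁻¹) * t))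
    (by positivity : 0 ≤ (1 + b)⁻¹) (by positivity : 0 ≤ b / (1 + b))
    (by field_simp)
  have hpoint : (1 + b)⁻¹ • ((1 + b) * s) + (b / (1 + b)) • ((1 + b⁻¹) * t) = s + t := by
    simp only [smul_eq_mul]
    field_simp
    ring
  have hleft : (1 + b)⁻¹ • ((1 + b) * s) ^ ρ = (1 + b) ^ (ρ - 1) * s ^ ρ := by
    rw [smul_eq_mul, Real.mul_rpow hb1.le hs, Real.rpow_sub hb1, Real.rpow_one]
    ring
  have hright : (b / (1 + b)) • ((1 + b⁻¹) * t) ^ ρ = (1 + b⁻¹) ^ (ρ - 1) * t ^ ρ := by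
    rw [smul_eq_mul, Real.mul_rpow hb1'.le ht, Real.rpow_sub hb1', Real.rpow_one]
    field_simp
    ring
  rwa [hpoint, hleft, hright] at hconv

theorem mul_le_young_of_le_add {ρ μ b Δ d s t r : ℝ} (hρ : 1 < ρ) (hμ : 0 < μ) (hb : 0 < b)
    (hΔ : 0 ≤ Δ) (hd : 0 ≤ d) (hs : 0 ≤ s) (ht : 0 ≤ t) (hdst : d ≤ s + t) (htr : t ≤ r) :
    Δ * d ≤ μ / 2 * s ^ ρ +
      (1 + b) * ((ρ - 1) / ρ) * (2 / (μ * ρ)) ^ (1 / (ρ - 1)) * Δ ^ (ρ / (ρ - 1)) +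
        μ / (2 * b ^ (ρ - 1)) * r ^ ρ := by
  have hρ0 : 0 < ρ := by linarith
  have hb1 : 0 < 1 + b := by linarith
  have hpow : 0 < (1 + b) ^ (ρ - 1) := Real.rpow_pos_of_pos hb1 _
  set μ' := μ / (1 + b) ^ (ρ - 1) with hμ'
  have hyoung := young_inequality_weighted (μ := μ') hρ (by positivity) hΔ hd
  have hsplit : d ^ ρ ≤ (1 + b) ^ (ρ - 1) * s ^ ρ + (1 + b⁻¹) ^ (ρ - 1) * t ^ ρ :=
    (Real.rpow_le_rpow hd hdst hρ0.le).trans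
      (rpow_add_le_weighted_rpow_add_rpow hρ.le hb hs ht)
  have hcoef_s : μ' / 2 * (1 + b) ^ (ρ - 1) = μ / 2 := by rw [hμ']; field_simp
  have hcoef_t : μ' / 2 * (1 + b⁻¹) ^ (ρ - 1) = μ / (2 * b ^ (ρ - 1)) := by
    rw [show 1 + b⁻¹ = (1 + b) * b⁻¹ by field_simp; ring, Real.mul_rpow hb1.le (by positivity),
      Real.inv_rpow hb.le, hμ']
    field_simp
  have hcoef_Δ : (2 / (μ' * ρ)) ^ (1 / (ρ - 1)) = (1 + b) * (2 / (μ * ρ)) ^ (1 / (ρ - 1)) := by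
    rw [show 2 / (μ' * ρ) = (1 + b) ^ (ρ - 1) * (2 / (μ * ρ)) by rw [hμ']; field_simp,
      Real.mul_rpow hpow.le (by positivity), ← Real.rpow_mul hb1.le,
      mul_one_div_cancel (by linarith : ρ - 1 ≠ 0), Real.rpow_one]
  have htail : t ^ ρ ≤ r ^ ρ := Real.rpow_le_rpow ht htr hρ0.le
  have hdρ : μ' / 2 * d ^ ρ ≤ μ / 2 * s ^ ρ + μ / (2 * b ^ (ρ - 1)) * r ^ ρ := by
    calc μ' / 2 * d ^ ρ
        ≤ μ' / 2 * ((1 + b) ^ (ρ - 1) * s ^ ρ + (1 + b⁻¹) ^ (ρ - 1) * t ^ ρ) := by gcongr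
      _ = μ / 2 * s ^ ρ + μ / (2 * b ^ (ρ - 1)) * t ^ ρ := by
        rw [← hcoef_s, ← hcoef_t]; ring
      _ ≤ μ / 2 * s ^ ρ + μ / (2 * b ^ (ρ - 1)) * r ^ ρ := by gcongr
  rw [hcoef_Δ] at hyoung
  linarith

theorem AffineMap.apply_le_add_slope_mul_norm_sub {E : Type*} [SeminormedAddCommGroup E]
    [NormedSpace ℝ E] {Q : Set E} (hQ : Convex ℝ Q) {ybar y : E} (hybar : ybar ∈ Q) (hy : y ∈ Q)
    (l : E →ᵃ[ℝ] ℝ) {r M : ℝ} (hr : 0 < r)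
    (hM : M ∈ upperBounds ((fun x => l x) '' (Q ∩ Metric.closedBall ybar r))) :
    l y ≤ M + (M - l ybar) / r * ‖y - ybar‖ := by
  have hle : ∀ x ∈ Q, ‖x - ybar‖ ≤ r → l x ≤ M := fun x hx hxr =>
    hM ⟨x, ⟨hx, by rwa [Metric.mem_closedBall, dist_eq_norm]⟩, rfl⟩
  have hbase : l ybar ≤ M := hle ybar hybar (by simpa using hr.le)
  have hslope : 0 ≤ (M - l ybar) / r * ‖y - ybar‖ := by
    have : 0 ≤ M - l ybar := by linarith
    positivity
  rcases le_or_gt ‖y - ybar‖ r with hyr | hyr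
  · linarith [hle y hy hyr]
  have hd : 0 < ‖y - ybar‖ := hr.trans hyr
  set t := r / ‖y - ybar‖
  have ht : 0 < t := by positivity
  have ht1 : t ≤ 1 := (div_le_one hd).2 hyr.le
  have hexit : l (AffineMap.lineMap ybar y t) ≤ M := by
    refine hle _ (hQ.lineMap_mem hybar hy ⟨ht.le, ht1⟩) (le_of_eq ?_)
    rw [AffineMap.lineMap_apply_module', add_sub_cancel_right, norm_smul, Real.norm_of_nonneg ht.le,
      div_mul_cancel₀ _ hd.ne']
  rw [AffineMap.apply_lineMap, AffineMap.lineMap_apply_module, smul_eq_mul, smul_eq_mul] at hexit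
  have hly : t * (l y - l ybar) ≤ M - l ybar := by linarith
  have hincr : l y - l ybar ≤ (M - l ybar) / r * ‖y - ybar‖ := by
    rw [div_mul_eq_mul_div, le_div_iff₀ hr]
    calc (l y - l ybar) * r = t * (l y - l ybar) * ‖y - ybar‖ := by
          simp only [t]; field_simp
      _ ≤ (M - l ybar) * ‖y - ybar‖ := by gcongr
  linarith

theorem eq_of_isGreatest_image_inter_closedBall_zero {α β : Type*} [MetricSpace α] [Preorder β]
    {f : α → β} {Q : Set α} {c : α} {m : β}
    (h : IsGreatest (f '' (Q ∩ Metric.closedBall c 0)) m) : m = f c := by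
  obtain ⟨x, ⟨-, hx⟩, rfl⟩ := h.1
  rw [Metric.closedBall_zero] at hx
  rw [hx]

theorem lambda_star_combined_bound_general
    {E : Type*} [NormedAddCommGroup E] [NormedSpace ℝ E]
    (Q : Set E) (hQconv : Convex ℝ Q)
    (ybar : E) (hybar : ybar ∈ Q)
    (l : E →ᵃ[ℝ] ℝ) (ρ μ : ℝ) (hρ : 2 ≤ ρ) (hμ : 0 < μ)
    (rbar : ℝ) (hrbar : 0 < rbar)
    (xbar : E) (hxbar : ‖xbar - ybar‖ ≤ rbar)
    (ψ : ℝ → ℝ)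
    (hψ : ∀ r : ℝ, 0 ≤ r →
      IsGreatest ((fun x => l x) '' (Q ∩ Metric.closedBall ybar r)) (ψ r)) :
    ∀ b : ℝ, 0 < b →
      sSup ((fun y => l y - (μ / 2) * ‖y - xbar‖ ^ ρ) '' Q) ≤
        ψ rbar + (1 + b) * ((ρ - 1) / ρ) * (2 / (μ * ρ)) ^ (1 / (ρ - 1)) *
            ((ψ rbar - ψ 0) / rbar) ^ (ρ / (ρ - 1)) +
          μ / (2 * b ^ (ρ - 1)) * rbar ^ ρ := by
  intro b hb
  have hψ0 : ψ 0 = l ybar := eq_of_isGreatest_image_inter_closedBall_zero (hψ 0 le_rfl)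
  have hslope : 0 ≤ (ψ rbar - ψ 0) / rbar := by
    have hmono : ψ 0 ≤ ψ rbar :=
      (hψ rbar hrbar.le).2 ⟨ybar, ⟨hybar, by simpa using hrbar.le⟩, hψ0.symm⟩
    exact div_nonneg (by linarith) hrbar.le
  refine csSup_le ⟨_, Set.mem_image_of_mem _ hybar⟩ ?_
  rintro _ ⟨y, hy, rfl⟩
  have hgrowth := AffineMap.apply_le_add_slope_mul_norm_sub hQconv hybar hy l hrbar
    (hψ rbar hrbar.le).2
  have hyoung := mul_le_young_of_le_add (ρ := ρ) (by linarith) hμ hb hslope (norm_nonneg _)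
    (norm_nonneg (y - xbar)) (norm_nonneg _) (norm_sub_le_norm_sub_add_norm_sub y xbar ybar) hxbar
  rw [← hψ0] at hgrowth
  dsimp only
  linarith

/-- Corollary B.1. Combining Lemmas B.2 and B.3: for
`x̄ ∈ Q` with `‖x̄ − ȳ‖ ≤ r̄` and every `b > 0`,
`λ*_μ(x̄) ≤ ψ(r̄) + (1+b)((ρ−1)/ρ)(2/(μρ))^{1/(ρ−1)}((ψ(r̄)−ψ(0))/r̄)^{ρ/(ρ−1)} + (μ/(2b^{ρ−1}))r̄^ρ`. -/
theorem lambda_star_combined_bound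
    {E : Type*} [NormedAddCommGroup E] [NormedSpace ℝ E] [FiniteDimensional ℝ E]
    (Q : Set E) (hQc : IsClosed Q) (hQconv : Convex ℝ Q)
    (ybar : E) (hybar : ybar ∈ Q)
    (l : E →ᵃ[ℝ] ℝ) (ρ μ : ℝ) (hρ : 2 ≤ ρ) (hμ : 0 < μ)
    (rbar : ℝ) (hrbar : 0 < rbar)
    (xbar : E) (hxbarQ : xbar ∈ Q) (hxbar : ‖xbar - ybar‖ ≤ rbar)
    (ψ : ℝ → ℝ)
    (hψ : ∀ r : ℝ, 0 ≤ r →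
      IsGreatest ((fun x => l x) '' (Q ∩ Metric.closedBall ybar r)) (ψ r)) :
    ∀ b : ℝ, 0 < b →
      sSup ((fun y => l y - (μ / 2) * ‖y - xbar‖ ^ ρ) '' Q) ≤
        ψ rbar + (1 + b) * ((ρ - 1) / ρ) * (2 / (μ * ρ)) ^ (1 / (ρ - 1)) *
            ((ψ rbar - ψ 0) / rbar) ^ (ρ / (ρ - 1)) +
          μ / (2 * b ^ (ρ - 1)) * rbar ^ ρ :=
  lambda_star_combined_bound_general Q hQconv ybar hybar l ρ μ hρ hμ rbar hrbar xbar hxbar ψ hψ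
end

section
/- (Lemma B.4, martingale tail bound.) Let (Ω, 𝓕, P) be a probability space with a filtration 𝓕_{−1} ⊆ 𝓕_0 ⊆ ⋯ ⊆ 𝓕_N ⊆ 𝓕. Let ψ_0, …, ψ_N be real random variables with ψ_i 𝓕_i-measurable, and let μ_i ≥ 0 and ν_i > 0 be deterministic reals such that, almost surely, E[ψ_i | 𝓕_{i−1}] ≤ μ_i and E[exp(ψ_i²/ν_i²) | 𝓕_{i−1}] ≤ exp(1) for each i = 0,…,N. Then for every Λ ≥ 0: P[ Σ_{i=0}^{N} ψ_i > Σ_{i=0}^{N} μ_i + Λ (Σ_{i=0}^{N} ν_i²)^{1/2} ] ≤ exp(−Λ²/3). -/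
/-! Chernoff's method. The elementary inequality `exp u ≤ u + exp (9 u² / 16)`, followed by
the tangent-line bound for the concave map `y ↦ y ^ s` at `y = e` (or, when `l ν` is large,
Young's inequality `l x ≤ 3/8 l² ν² + 2/3 x² / ν²`), turns the two conditional hypotheses into
`E[exp (l ψ_i) | 𝓕_{i-1}] ≤ exp (l μ_i + 3/4 l² ν_i²)` for every `l ≥ 0`. Pulling out one
factor at a time bounds `E[exp (l Σ ψ_i)]` by the product of these; this is done with lower
Lebesgue integrals, so no integrability of the products is needed. Markov's inequality with
`l = 2Λ / (3 √(Σ ν_i²))` then gives the tail `exp (-Λ² / 3)`. -/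

open Real MeasureTheory
open scoped ENNReal

open Finset in
lemma cubic_le_exp_of_nonneg {x : ℝ} (hx : 0 ≤ x) :
    1 + x + x ^ 2 / 2 + x ^ 3 / 6 ≤ exp x := by
  have h := sum_le_exp_of_nonneg hx 4
  norm_num [sum_range_succ, Nat.factorial] at h
  linarith

open Finset in
lemma exp_le_quintic_of_mem_Icc {x : ℝ} (h0 : 0 ≤ x) (h1 : x ≤ 1) :
    exp x ≤ 1 + x + x ^ 2 / 2 + x ^ 3 / 6 + x ^ 4 / 24 + x ^ 5 / 100 := by
  have h := exp_bound' h0 h1 (n := 5) (by norm_num)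
  norm_num [sum_range_succ, Nat.factorial] at h
  nlinarith [pow_nonneg h0 5]

open Finset in
lemma exp_le_quartic_of_mem_Icc {x : ℝ} (h0 : 0 ≤ x) (h1 : x ≤ 1) :
    exp x ≤ 1 + x + x ^ 2 / 2 + x ^ 3 / 6 + x ^ 4 * 5 / 96 := by
  have h := exp_bound' h0 h1 (n := 4) (by norm_num)
  norm_num [sum_range_succ, Nat.factorial] at h
  nlinarith [pow_nonneg h0 4]

lemma exp_le_add_exp_sq (u : ℝ) : exp u ≤ u + exp (9 / 16 * u ^ 2) := by
  have hq : 1 + 9 / 16 * u ^ 2 ≤ exp (9 / 16 * u ^ 2) := by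
    linarith [add_one_le_exp (9 / 16 * u ^ 2)]
  rcases le_or_gt u 0 with hu | hu
  · have hD : 0 < 1 - u + u ^ 2 / 2 := by nlinarith
    have hneg : 1 - u + u ^ 2 / 2 ≤ exp (-u) := by
      simpa [neg_sq, sub_eq_add_neg] using quadratic_le_exp_of_nonneg (neg_nonneg.2 hu)
    have h1 : exp u ≤ (1 - u + u ^ 2 / 2)⁻¹ := by
      simpa [exp_neg] using inv_anti₀ hD hneg
    have h2 : (1 - u + u ^ 2 / 2)⁻¹ ≤ 1 + u + 9 / 16 * u ^ 2 := by
      rw [inv_le_iff_one_le_mul₀ hD]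
      nlinarith [sq_nonneg u, sq_nonneg (u * u)]
    linarith
  rcases le_or_gt (16 / 9) u with hu_large | hu_lt
  · have : exp u ≤ exp (9 / 16 * u ^ 2) := exp_le_exp.2 (by nlinarith)
    linarith
  rcases le_or_gt u 1 with hu1 | hu1
  · have hup := exp_le_quintic_of_mem_Icc hu.le hu1
    have hlo := cubic_le_exp_of_nonneg (x := 9 / 16 * u ^ 2) (by positivity)
    nlinarith [sq_nonneg (u * (u - 2 / 3)), sq_nonneg (u * u * (u - 2 / 3)), pow_nonneg hu.le 5,
      pow_nonneg hu.le 4, pow_nonneg hu.le 6, sq_nonneg (u - 2 / 3)]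
  · have h0 : 0 ≤ u - 1 := by linarith
    have hup := exp_le_quartic_of_mem_Icc h0 (by linarith)
    have he : exp u = exp 1 * exp (u - 1) := by rw [← exp_add]; ring_nf
    have he1 := exp_one_lt_d9
    have hlo := cubic_le_exp_of_nonneg (x := 9 / 16 * u ^ 2) (by positivity)
    have hpos := exp_pos (u - 1)
    nlinarith [pow_nonneg h0 4, pow_nonneg h0 3, sq_nonneg (u - 1), mul_pos (exp_pos 1) hpos,
      sq_nonneg (u * (u - 1)), sq_nonneg (u * u - 1)]

/-- Tangent line of the concave map `y ↦ y ^ s` at `y = e`. -/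
lemma exp_mul_le_tangent {s : ℝ} (h0 : 0 ≤ s) (h1 : s ≤ 1) (z : ℝ) :
    exp (s * z) ≤ s * exp (s - 1) * exp z + (1 - s) * exp s := by
  have h := geom_mean_le_arith_mean2_weighted h0 (sub_nonneg.2 h1)
    (exp_pos z).le (exp_pos 1).le (by ring)
  rw [← exp_mul, ← exp_mul, one_mul, ← exp_add] at h
  calc exp (s * z) = exp (z * s + (1 - s)) * exp (s - 1) := by rw [← exp_add]; ring_nf
    _ ≤ (s * exp z + (1 - s) * exp 1) * exp (s - 1) := by gcongr
    _ = s * exp (s - 1) * exp z + (1 - s) * exp s := by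
        rw [add_mul, mul_assoc (1 - s), ← exp_add]; ring_nf

lemma exp_mul_le_of_sq_le {l ν s : ℝ} (hν : ν ≠ 0) (hs : s = 9 / 16 * (l * ν) ^ 2)
    (hs1 : s ≤ 1) (x : ℝ) :
    exp (l * x) ≤ (1 - s) * exp s + l * x + s * exp (s - 1) * exp (x ^ 2 / ν ^ 2) := by
  have hsx : 9 / 16 * (l * x) ^ 2 = s * (x ^ 2 / ν ^ 2) := by rw [hs]; field_simp
  have := exp_mul_le_tangent (hs ▸ by positivity) hs1 (x ^ 2 / ν ^ 2)
  linarith [hsx ▸ exp_le_add_exp_sq (l * x)]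

lemma exp_mul_le_of_young {l ν : ℝ} (hν : ν ≠ 0) (x : ℝ) :
    exp (l * x) ≤ exp (3 / 8 * (l * ν) ^ 2) *
      (2 / 3 * exp (-(1 / 3)) * exp (x ^ 2 / ν ^ 2) + 1 / 3 * exp (2 / 3)) := by
  have hyoung : l * x ≤ 3 / 8 * (l * ν) ^ 2 + 2 / 3 * (x ^ 2 / ν ^ 2) := by
    have hx : x = ν * (x / ν) := (mul_div_cancel₀ x hν).symm
    rw [← div_pow]
    nth_rewrite 1 [hx]
    nlinarith [sq_nonneg (3 * l * ν - 4 * (x / ν))]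
  have htangent := exp_mul_le_tangent (s := 2 / 3) (by norm_num) (by norm_num) (x ^ 2 / ν ^ 2)
  norm_num at htangent
  calc exp (l * x) ≤ exp (3 / 8 * (l * ν) ^ 2) * exp (2 / 3 * (x ^ 2 / ν ^ 2)) := by
        rw [← exp_add]; exact exp_le_exp.2 hyoung
    _ ≤ _ := by gcongr

section

variable {Ω : Type*} {m m0 : MeasurableSpace Ω} {P : Measure[m0] Ω}

lemma condExp_le_of_le_affine [IsFiniteMeasure P] (hm : m ≤ m0) {f X Z : Ω → ℝ}
    {α β γ cX cZ : ℝ} (hβ : 0 ≤ β) (hγ : 0 ≤ γ) (hf0 : 0 ≤ f)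
    (hfm : AEStronglyMeasurable[m0] f P) (hX : Integrable X P) (hZ : Integrable Z P)
    (hle : ∀ ω, f ω ≤ α + β * X ω + γ * Z ω)
    (hcX : ∀ᵐ ω ∂P, P[X|m] ω ≤ cX) (hcZ : ∀ᵐ ω ∂P, P[Z|m] ω ≤ cZ) :
    Integrable f P ∧ ∀ᵐ ω ∂P, P[f|m] ω ≤ α + β * cX + γ * cZ := by
  have hαX : Integrable ((fun _ => α) + β • X) P := (integrable_const α).add (hX.smul β)
  have hG : Integrable ((fun _ => α) + β • X + γ • Z) P := hαX.add (hZ.smul γ)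
  have hf : Integrable f P :=
    hG.mono' hfm (ae_of_all _ fun ω => (Real.norm_of_nonneg (hf0 ω)).trans_le (hle ω))
  refine ⟨hf, ?_⟩
  filter_upwards [condExp_mono (m := m) hf hG (ae_of_all _ hle), condExp_add hαX (hZ.smul γ) m,
    condExp_add (integrable_const α) (hX.smul β) m, condExp_smul β X m, condExp_smul γ Z m,
    hcX, hcZ] with ω hmono hadd hadd' hβX hγZ hX hZ
  simp only [hadd, hadd', hβX, hγZ, condExp_const hm, Pi.add_apply, Pi.smul_apply,
    smul_eq_mul] at hmono
  nlinarith [mul_le_mul_of_nonneg_left hX hβ, mul_le_mul_of_nonneg_left hZ hγ]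

lemma condExp_exp_mul_le [IsFiniteMeasure P] (hm : m ≤ m0) {X : Ω → ℝ} {μ ν l : ℝ}
    (hμ : 0 ≤ μ) (hν : ν ≠ 0) (hl : 0 ≤ l) (hX : Integrable X P)
    (hZ : Integrable (fun ω => exp (X ω ^ 2 / ν ^ 2)) P)
    (hcX : ∀ᵐ ω ∂P, P[X|m] ω ≤ μ)
    (hcZ : ∀ᵐ ω ∂P, P[fun ω => exp (X ω ^ 2 / ν ^ 2)|m] ω ≤ exp 1) :
    Integrable (fun ω => exp (l * X ω)) P ∧
      ∀ᵐ ω ∂P, P[fun ω => exp (l * X ω)|m] ω ≤ exp (l * μ + 3 / 4 * (l * ν) ^ 2) := by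
  have hf0 : 0 ≤ fun ω => exp (l * X ω) := fun ω => (exp_pos _).le
  have hfm : AEStronglyMeasurable[m0] (fun ω => exp (l * X ω)) P :=
    continuous_exp.comp_aestronglyMeasurable (hX.1.const_mul l)
  have hlμ : 0 ≤ l * μ := mul_nonneg hl hμ
  rcases le_or_gt (9 / 16 * (l * ν) ^ 2) 1 with hsmall | hlarge
  · set s := 9 / 16 * (l * ν) ^ 2 with hs
    obtain ⟨hf, hc⟩ := condExp_le_of_le_affine hm hl (by positivity) hf0 hfm hX hZ
      (exp_mul_le_of_sq_le hν hs hsmall <| X ·) hcX hcZ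
    refine ⟨hf, hc.mono fun ω hω => hω.trans ?_⟩
    have h1 : 1 ≤ exp s := one_le_exp (by positivity)
    have h2 : exp s ≤ exp (3 / 4 * (l * ν) ^ 2) := exp_le_exp.2 (by rw [hs]; nlinarith)
    calc (1 - s) * exp s + l * μ + s * exp (s - 1) * exp 1
        = exp s + l * μ := by rw [mul_assoc s, ← exp_add]; ring_nf
      _ ≤ (1 + l * μ) * exp s := by nlinarith
      _ ≤ exp (l * μ) * exp (3 / 4 * (l * ν) ^ 2) := by
          gcongr; linarith [add_one_le_exp (l * μ)]
      _ = _ := (exp_add _ _).symm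
  · obtain ⟨hf, hc⟩ := condExp_le_of_le_affine hm
      (α := exp (3 / 8 * (l * ν) ^ 2) * (1 / 3 * exp (2 / 3)))
      (γ := exp (3 / 8 * (l * ν) ^ 2) * (2 / 3 * exp (-(1 / 3))))
      le_rfl (by positivity) hf0 hfm hX hZ
      (fun ω => (exp_mul_le_of_young hν (X ω)).trans_eq (by ring)) hcX hcZ
    refine ⟨hf, hc.mono fun ω hω => hω.trans ?_⟩
    calc exp (3 / 8 * (l * ν) ^ 2) * (1 / 3 * exp (2 / 3)) + 0 * μ +
          exp (3 / 8 * (l * ν) ^ 2) * (2 / 3 * exp (-(1 / 3))) * exp 1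
        = exp (3 / 8 * (l * ν) ^ 2 + 2 / 3) := by
          have he : exp (-(1 / 3)) * exp 1 = exp (2 / 3) := by rw [← exp_add]; norm_num
          rw [exp_add]
          linear_combination exp (3 / 8 * (l * ν) ^ 2) * (2 / 3) * he
      _ ≤ exp (l * μ + 3 / 4 * (l * ν) ^ 2) := exp_le_exp.2 (by linarith)

lemma setLIntegral_ofReal_le_of_condExp_le [IsFiniteMeasure P] (hm : m ≤ m0) {Y : Ω → ℝ}
    (hY0 : 0 ≤ Y) (hY : Integrable Y P) {C : ℝ} (hC : ∀ᵐ ω ∂P, P[Y|m] ω ≤ C)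
    {s : Set Ω} (hs : MeasurableSet[m] s) :
    ∫⁻ ω in s, ENNReal.ofReal (Y ω) ∂P ≤ ENNReal.ofReal C * P s := by
  rw [← ofReal_integral_eq_lintegral_ofReal hY.integrableOn (ae_of_all _ hY0),
    ← setIntegral_condExp hm hY hs]
  calc ENNReal.ofReal (∫ ω in s, P[Y|m] ω ∂P)
      ≤ ENNReal.ofReal (∫ ω in s, C ∂P) :=
        ENNReal.ofReal_le_ofReal (setIntegral_mono_ae integrable_condExp.integrableOn
          (integrable_const C).integrableOn hC)
    _ = ENNReal.ofReal C * P s := by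
        rw [setIntegral_const, smul_eq_mul, ENNReal.ofReal_mul measureReal_nonneg,
          ofReal_measureReal (measure_ne_top P s), mul_comm]

/-- Comparing `P.withDensity g` with `C • P` on the sub-σ-algebra `m`. -/
lemma lintegral_mul_le_of_setLIntegral_le (hm : m ≤ m0) {f g : Ω → ℝ≥0∞}
    (hf : Measurable[m] f) (hg : AEMeasurable[m0] g P) {C : ℝ≥0∞}
    (hC : ∀ s, MeasurableSet[m] s → ∫⁻ ω in s, g ω ∂P ≤ C * P s) :
    ∫⁻ ω, f ω * g ω ∂P ≤ C * ∫⁻ ω, f ω ∂P := by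
  have hle : (P.withDensity g).trim hm ≤ C • P.trim hm := by
    refine Measure.le_iff.2 fun s hs => ?_
    rw [trim_measurableSet_eq hm hs, Measure.smul_apply, trim_measurableSet_eq hm hs,
      withDensity_apply _ (hm s hs), smul_eq_mul]
    exact hC s hs
  calc ∫⁻ ω, f ω * g ω ∂P = ∫⁻ ω, f ω ∂(P.withDensity g).trim hm := by
        rw [lintegral_trim hm hf,
          lintegral_withDensity_eq_lintegral_mul₀ hg (hf.mono hm le_rfl).aemeasurable]
        simp only [Pi.mul_apply, mul_comm]
    _ ≤ ∫⁻ ω, f ω ∂(C • P.trim hm) := lintegral_mono' hle le_rfl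
    _ = C * ∫⁻ ω, f ω ∂P := by
        rw [lintegral_smul_measure, lintegral_trim hm hf, smul_eq_mul]

open Finset in
lemma lintegral_exp_sum_le_prod [IsProbabilityMeasure P] {ℱ : ℕ → MeasurableSpace Ω}
    (hmono : Monotone ℱ) (hle : ∀ i, ℱ i ≤ m0) {X : ℕ → Ω → ℝ}
    (hX : ∀ i, StronglyMeasurable[ℱ (i + 1)] (X i)) {D : ℕ → ℝ≥0∞}
    (hD : ∀ i s, MeasurableSet[ℱ i] s →
      ∫⁻ ω in s, ENNReal.ofReal (exp (X i ω)) ∂P ≤ D i * P s) (n : ℕ) :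
    ∫⁻ ω, ENNReal.ofReal (exp (∑ i ∈ range n, X i ω)) ∂P ≤ ∏ i ∈ range n, D i := by
  induction n with
  | zero => simp
  | succ n ih =>
    have hS : Measurable[ℱ n] fun ω => ENNReal.ofReal (exp (∑ i ∈ range n, X i ω)) :=
      (stronglyMeasurable_fun_sum _ fun i hi => (hX i).mono (hmono (mem_range.1 hi))).measurable
        |>.exp.ennreal_ofReal
    have hXn : AEMeasurable[m0] (fun ω => ENNReal.ofReal (exp (X n ω))) P :=
      ((hX n).mono (hle (n + 1))).measurable.exp.ennreal_ofReal.aemeasurable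
    calc ∫⁻ ω, ENNReal.ofReal (exp (∑ i ∈ range (n + 1), X i ω)) ∂P
        = ∫⁻ ω, ENNReal.ofReal (exp (∑ i ∈ range n, X i ω)) *
            ENNReal.ofReal (exp (X n ω)) ∂P := by
          simp_rw [sum_range_succ, exp_add, ENNReal.ofReal_mul (exp_pos _).le]
      _ ≤ D n * ∫⁻ ω, ENNReal.ofReal (exp (∑ i ∈ range n, X i ω)) ∂P :=
          lintegral_mul_le_of_setLIntegral_le (hle n) hS hXn (hD n)
      _ ≤ ∏ i ∈ range (n + 1), D i := by
          rw [prod_range_succ, mul_comm]; gcongr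

lemma measure_lt_le_exp_mul_lintegral {X : Ω → ℝ} (hX : AEMeasurable[m0] X P) {l : ℝ}
    (hl : 0 ≤ l) (a : ℝ) :
    P {ω | a < X ω} ≤
      ENNReal.ofReal (exp (-(l * a))) * ∫⁻ ω, ENNReal.ofReal (exp (l * X ω)) ∂P := by
  have hmeas : AEMeasurable[m0] (fun ω => ENNReal.ofReal (exp (-(l * a)) * exp (l * X ω))) P :=
    (hX.const_mul l).exp.const_mul _ |>.ennreal_ofReal
  calc P {ω | a < X ω}
      ≤ P {ω | 1 ≤ ENNReal.ofReal (exp (-(l * a)) * exp (l * X ω))} := by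
        refine measure_mono fun ω (hω : a < X ω) => ?_
        rw [Set.mem_ofPred_eq, ENNReal.one_le_ofReal, ← exp_add, one_le_exp_iff]
        nlinarith
    _ ≤ ∫⁻ ω, ENNReal.ofReal (exp (-(l * a)) * exp (l * X ω)) ∂P := by
        simpa using mul_meas_ge_le_lintegral₀ hmeas 1
    _ = _ := by
        simp_rw [ENNReal.ofReal_mul (exp_pos _).le]
        exact lintegral_const_mul' _ _ ENNReal.ofReal_ne_top

lemma measure_gt_add_mul_sqrt_le {S : Ω → ℝ} (hS : AEMeasurable[m0] S P)
    {M T Λ : ℝ} (hT : 0 < T) (hΛ : 0 ≤ Λ)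
    (hmgf : ∀ l, 0 ≤ l → ∫⁻ ω, ENNReal.ofReal (exp (l * S ω)) ∂P ≤
      ENNReal.ofReal (exp (l * M + 3 / 4 * l ^ 2 * T))) :
    P {ω | M + Λ * sqrt T < S ω} ≤ ENNReal.ofReal (exp (-Λ ^ 2 / 3)) := by
  -- the choice of `l` minimises `-l Λ √T + 3/4 l² T`
  set l := 2 * Λ / (3 * sqrt T)
  have hl : 0 ≤ l := by positivity
  have hlT : l * sqrt T = 2 * Λ / 3 := by simp only [l]; field_simp [(sqrt_pos.2 hT).ne']
  calc P {ω | M + Λ * sqrt T < S ω}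
      ≤ ENNReal.ofReal (exp (-(l * (M + Λ * sqrt T)))) *
          ∫⁻ ω, ENNReal.ofReal (exp (l * S ω)) ∂P := measure_lt_le_exp_mul_lintegral hS hl _
    _ ≤ ENNReal.ofReal (exp (-(l * (M + Λ * sqrt T)))) *
          ENNReal.ofReal (exp (l * M + 3 / 4 * l ^ 2 * T)) := by gcongr; exact hmgf l hl
    _ = ENNReal.ofReal (exp (-Λ ^ 2 / 3)) := by
        rw [← ENNReal.ofReal_mul (exp_pos _).le, ← exp_add]
        congr 2
        linear_combination (-Λ + 3 / 4 * (l * sqrt T + 2 * Λ / 3)) * hlT -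
          3 / 4 * l ^ 2 * sq_sqrt hT.le

end

/-- The filtration `𝓕_{−1} ⊆ 𝓕_0 ⊆ ⋯` is encoded by `ℱ i = 𝓕_{i−1}`, so `ψ i` is
`ℱ (i + 1)`-measurable and conditioning on `𝓕_{i−1}` is conditioning on `ℱ i`. -/
theorem martingale_tail_bound
    {Ω : Type*} [m0 : MeasurableSpace Ω]
    (P : Measure Ω) [IsProbabilityMeasure P]
    (N : ℕ) (ℱ : ℕ → MeasurableSpace Ω)
    (hmono : Monotone ℱ) (hle : ∀ i, ℱ i ≤ m0)
    (ψ : ℕ → Ω → ℝ) (μs ν : ℕ → ℝ)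
    (hμs : ∀ i, 0 ≤ μs i) (hν : ∀ i, 0 < ν i)
    (hmeas : ∀ i, StronglyMeasurable[ℱ (i + 1)] (ψ i))
    (hint : ∀ i, Integrable (ψ i) P)
    (hintexp : ∀ i, Integrable (fun ω => Real.exp ((ψ i ω) ^ 2 / (ν i) ^ 2)) P)
    (hcond : ∀ i, ∀ᵐ ω ∂P, (P[ψ i | ℱ i]) ω ≤ μs i)
    (hcondexp : ∀ i, ∀ᵐ ω ∂P,
      (P[(fun ω => Real.exp ((ψ i ω) ^ 2 / (ν i) ^ 2)) | ℱ i]) ω ≤ Real.exp 1) :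
    ∀ Λ : ℝ, 0 ≤ Λ →
      P {ω | ∑ i ∈ Finset.range (N + 1), ψ i ω >
          (∑ i ∈ Finset.range (N + 1), μs i) +
            Λ * Real.sqrt (∑ i ∈ Finset.range (N + 1), (ν i) ^ 2)} ≤
        ENNReal.ofReal (Real.exp (-Λ ^ 2 / 3)) := by
  intro Λ hΛ
  refine measure_gt_add_mul_sqrt_le
    (Finset.aemeasurable_fun_sum _ fun i _ => (hint i).aemeasurable)
    (Finset.sum_pos (fun i _ => pow_pos (hν i) 2) Finset.nonempty_range_add_one) hΛ
    fun l hl => ?_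
  have hstep : ∀ i s, MeasurableSet[ℱ i] s →
      ∫⁻ ω in s, ENNReal.ofReal (exp (l * ψ i ω)) ∂P ≤
        ENNReal.ofReal (exp (l * μs i + 3 / 4 * (l * ν i) ^ 2)) * P s := fun i s hs => by
    obtain ⟨hi, hc⟩ := condExp_exp_mul_le (hle i) (hμs i) (hν i).ne' hl (hint i) (hintexp i)
      (hcond i) (hcondexp i)
    exact setLIntegral_ofReal_le_of_condExp_le (hle i) (fun ω => (exp_pos _).le) hi hc hs
  calc ∫⁻ ω, ENNReal.ofReal (exp (l * ∑ i ∈ Finset.range (N + 1), ψ i ω)) ∂P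
      ≤ ∏ i ∈ Finset.range (N + 1),
          ENNReal.ofReal (exp (l * μs i + 3 / 4 * (l * ν i) ^ 2)) := by
        simp_rw [Finset.mul_sum]
        exact lintegral_exp_sum_le_prod hmono hle (fun i => (hmeas i).const_mul l) hstep (N + 1)
    _ = _ := by
        rw [← ENNReal.ofReal_prod_of_nonneg fun i _ => (exp_pos _).le, ← exp_sum,
          Finset.sum_add_distrib, ← Finset.mul_sum]
        simp only [mul_pow, ← Finset.mul_sum, mul_assoc]
end

section
/- Let n ≥ 1 and let A be a real symmetric positive semidefinite n×n matrix. Then min{ xᵀAx : x ∈ ℝⁿ, ‖x‖₁ = 1 } ≤ (1/n²) Σ_{i=1}^{n} A_{ii} ≤ (1/n) max_{1≤i,j≤n} |A_{ij}|. Consequently, if the quadratic function f(x) = ½ xᵀAx − bᵀx is strongly convex on ℝⁿ with parameter μ with respect to the ℓ₁-norm (i.e. (x−y)ᵀA(x−y) ≥ μ‖x−y‖₁² for all x, y), then μ ≤ max_{1≤i,j≤n}|A_{ij}| / n. -/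
/-!
Averaging the quadratic form over all `2ⁿ` sign vectors `s ∈ {±1}ⁿ` kills the off-diagonal
entries, since `s i * s j` sums to zero for `i ≠ j`: the average of `sᵀAs` is `trace A`.
Some sign vector therefore has `sᵀAs ≤ trace A`, and `s / n` lies on the unit ℓ₁-sphere with
`(s / n)ᵀA(s / n) ≤ trace A / n² ≤ max |A i j| / n`. Testing strong convexity at `s / n` and `0`
bounds `μ` by the same quantity.
-/

noncomputable section

open Real Matrix

open Finset

section SignVectors

variable {ι R : Type*} [Fintype ι] [DecidableEq ι]

theorem sum_units_mul_units (i j : ι) :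
    ∑ s : ι → ℤˣ, ((s i * s j : ℤˣ) : ℤ) = if i = j then 2 ^ Fintype.card ι else 0 := by
  split_ifs with hij
  · subst hij
    simp [Int.units_mul_self, Fintype.card_units_int]
  · -- flipping the sign of the `j`-th coordinate negates every summand
    set g : ι → ℤˣ := Pi.mulSingle j (-1)
    have hflip (s : ι → ℤˣ) :
        (((g * s) i * (g * s) j : ℤˣ) : ℤ) = -((s i * s j : ℤˣ) : ℤ) := by
      simp [g, Pi.mulSingle_eq_of_ne hij]
    have hsum := Equiv.sum_comp (Equiv.mulLeft g) fun s => ((s i * s j : ℤˣ) : ℤ)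
    simp only [Equiv.coe_mulLeft, hflip, sum_neg_distrib] at hsum
    omega

theorem sum_sign_dotProduct_mulVec [Ring R] (A : Matrix ι ι R) :
    ∑ s : ι → ℤˣ, (fun i => ((s i : ℤ) : R)) ⬝ᵥ A *ᵥ (fun i => ((s i : ℤ) : R)) =
      2 ^ Fintype.card ι * A.trace := by
  have hunits (i j : ι) : ∑ s : ι → ℤˣ, ((s i : ℤ) : R) * ((s j : ℤ) : R) =
      if i = j then 2 ^ Fintype.card ι else 0 := by
    have := congrArg (Int.cast : ℤ → R) (sum_units_mul_units i j)
    push_cast at this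
    simpa [apply_ite (Int.cast : ℤ → R)] using this
  calc ∑ s : ι → ℤˣ, (fun i => ((s i : ℤ) : R)) ⬝ᵥ A *ᵥ (fun i => ((s i : ℤ) : R))
      = ∑ i, ∑ j, (∑ s : ι → ℤˣ, ((s i : ℤ) : R) * ((s j : ℤ) : R)) * A i j := by
        simp only [dotProduct, mulVec, mul_sum, sum_mul]
        rw [sum_comm]
        refine sum_congr rfl fun i _ => ?_
        rw [sum_comm]
        refine sum_congr rfl fun j _ => sum_congr rfl fun s _ => ?_
        rw [mul_assoc, (Int.cast_commute (s j : ℤ) (A i j)).eq]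
    _ = 2 ^ Fintype.card ι * A.trace := by
        simp [hunits, trace, mul_sum]

theorem exists_sign_dotProduct_mulVec_le_trace [CommRing R] [LinearOrder R]
    [IsStrictOrderedRing R] (A : Matrix ι ι R) :
    ∃ s : ι → ℤˣ,
      (fun i => ((s i : ℤ) : R)) ⬝ᵥ A *ᵥ (fun i => ((s i : ℤ) : R)) ≤ A.trace := by
  have hsum : ∑ s : ι → ℤˣ,
      (fun i => ((s i : ℤ) : R)) ⬝ᵥ A *ᵥ (fun i => ((s i : ℤ) : R)) =
        ∑ _s : ι → ℤˣ, A.trace := by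
    simp [sum_sign_dotProduct_mulVec, Fintype.card_units_int, nsmul_eq_mul]
  obtain ⟨s, -, hs⟩ := exists_le_of_sum_le univ_nonempty hsum.le
  exact ⟨s, hs⟩

theorem exists_l1_unit_dotProduct_mulVec_le [Nonempty ι] [Field R] [LinearOrder R]
    [IsStrictOrderedRing R] (A : Matrix ι ι R) :
    ∃ x : ι → R, ∑ i, |x i| = 1 ∧ x ⬝ᵥ A *ᵥ x ≤ 1 / (Fintype.card ι : R) ^ 2 * A.trace := by
  obtain ⟨s, hs⟩ := exists_sign_dotProduct_mulVec_le_trace A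
  have hcard : (0 : R) < Fintype.card ι := by exact_mod_cast Fintype.card_pos
  refine ⟨(1 / (Fintype.card ι : R)) • fun i => ((s i : ℤ) : R), ?_, ?_⟩
  · have habs (u : ℤˣ) : |((u : ℤ) : R)| = 1 := by
      rcases Int.units_eq_one_or u with rfl | rfl <;> simp
    simp [habs, hcard.ne']
  · rw [mulVec_smul, smul_dotProduct, dotProduct_smul, smul_smul, smul_eq_mul,
      one_div_mul_one_div, ← sq]
    gcongr

end SignVectors

theorem l1_strong_convexity_parameter_bound_general
    (n : ℕ) (hn : 1 ≤ n)
    (A : Matrix (Fin n) (Fin n) ℝ)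
    (Amax : ℝ) (hAmax : IsGreatest {t : ℝ | ∃ i j, t = |A i j|} Amax)
    (μ : ℝ)
    (hμ : ∀ x y : Fin n → ℝ,
      μ * (∑ i, |x i - y i|) ^ 2 ≤ (x - y) ⬝ᵥ A.mulVec (x - y)) :
    (∃ x : Fin n → ℝ, (∑ i, |x i|) = 1 ∧
        x ⬝ᵥ A.mulVec x ≤ (1 / (n : ℝ) ^ 2) * ∑ i, A i i) ∧
    (1 / (n : ℝ) ^ 2) * (∑ i, A i i) ≤ (1 / (n : ℝ)) * Amax ∧
    μ ≤ Amax / n := by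
  have : NeZero n := ⟨by omega⟩
  obtain ⟨x, hx1, hxA⟩ := exists_l1_unit_dotProduct_mulVec_le A
  simp only [Fintype.card_fin] at hxA
  have htrace : (1 / (n : ℝ) ^ 2) * (∑ i, A i i) ≤ (1 / (n : ℝ)) * Amax := by
    have hdiag : ∑ i, A i i ≤ n * Amax := by
      simpa using sum_le_card_nsmul univ (fun i => A i i) Amax
        fun i _ => (le_abs_self _).trans (hAmax.2 ⟨i, i, rfl⟩)
    calc (1 / (n : ℝ) ^ 2) * (∑ i, A i i) ≤ (1 / (n : ℝ) ^ 2) * (n * Amax) := by gcongr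
      _ = (1 / (n : ℝ)) * Amax := by field_simp
  refine ⟨⟨x, hx1, hxA⟩, htrace, ?_⟩
  calc μ ≤ x ⬝ᵥ A *ᵥ x := by simpa [hx1] using hμ x 0
    _ ≤ (1 / (n : ℝ)) * Amax := hxA.trans htrace
    _ = Amax / n := by ring

/-- For a symmetric positive semidefinite matrix `A`, the
minimum of the quadratic form over the unit ℓ₁-sphere is at most
`(1/n²)·trace A ≤ (1/n)·max|A_{ij}|`; consequently any ℓ₁-strong-convexity
parameter `μ` of `f(x) = ½xᵀAx − bᵀx` satisfies `μ ≤ max|A_{ij}|/n`. -/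
theorem l1_strong_convexity_parameter_bound
    (n : ℕ) (hn : 1 ≤ n)
    (A : Matrix (Fin n) (Fin n) ℝ) (hsymm : A.IsSymm) (hpsd : A.PosSemidef)
    (Amax : ℝ) (hAmax : IsGreatest {t : ℝ | ∃ i j, t = |A i j|} Amax)
    (μ : ℝ)
    (hμ : ∀ x y : Fin n → ℝ,
      μ * (∑ i, |x i - y i|) ^ 2 ≤ (x - y) ⬝ᵥ A.mulVec (x - y)) :
    (∃ x : Fin n → ℝ, (∑ i, |x i|) = 1 ∧
        x ⬝ᵥ A.mulVec x ≤ (1 / (n : ℝ) ^ 2) * ∑ i, A i i) ∧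
    (1 / (n : ℝ) ^ 2) * (∑ i, A i i) ≤ (1 / (n : ℝ)) * Amax ∧
    μ ≤ Amax / n :=
  l1_strong_convexity_parameter_bound_general n hn A Amax hAmax μ hμ
end
end

section
/- (Entropy-type prox-function of the ℓ₁-ball.) Let n ≥ 1, let B = {x ∈ ℝⁿ : ‖x‖₁ ≤ 1}, let ψ(t) = t ln t for t > 0 and ψ(0) = 0, and define for x ∈ B: d(x) = min{ Σ_{i=1}^{n} [ψ(u^{(i)}) + ψ(v^{(i)})] : Σ_{i=1}^{n} [u^{(i)} + v^{(i)}] = 1, x^{(i)} = u^{(i)} − v^{(i)}, u^{(i)} ≥ 0, v^{(i)} ≥ 0 for all i } + ln(2n). Then: (i) d(0) = 0 and d(x) ≥ 0 for all x ∈ B; (ii) d(x) ≤ ln(2n) for all x ∈ B; (iii) d is strongly convex on B with parameter 1/2 with respect to ‖·‖₁, i.e. d(αx + (1−α)y) ≤ αd(x) + (1−α)d(y) − (1/4)α(1−α)‖x − y‖₁² for all x, y ∈ B and α ∈ [0,1]. -/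
/-!
Encode a splitting `x = u - v` as a point `w = (u, v)` of the probability simplex on `ι ⊕ ι`;
then `d x - log (2n)` is the least negative entropy `∑ w log w` over the splittings of `x`.
On this simplex the negative entropy lies between `-log (2n)` (Jensen, attained at the uniform
point, which splits `0`) and `0`, which gives (i) and (ii). For (iii), `t log t` is
`(a + b)⁻¹`-strongly convex on `[0, a + b]` since its second derivative is `1 / t`; applied
coordinatewise and combined with Cauchy–Schwarz for the weights `w₁ + w₂`, which sum to `2`, this
makes the negative entropy `1/2`-strongly convex on the simplex with respect to `‖·‖₁`. The mixture
of optimal splittings of `x` and `y` splits the mixture of `x` and `y`, and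
`‖x - y‖₁ ≤ ‖w₁ - w₂‖₁`.
-/

open Real Finset

theorem strongConvexOn_mul_log_Icc (M : ℝ) :
    StrongConvexOn (Set.Icc 0 M) M⁻¹ fun x ↦ x * log x := by
  rw [strongConvexOn_iff_convex]
  simp only [Real.norm_eq_abs, sq_abs]
  refine convexOn_of_hasDerivWithinAt2_nonneg (convex_Icc 0 M)
    (f' := fun x ↦ log x + 1 - M⁻¹ / 2 * (2 * x)) (f'' := fun x ↦ x⁻¹ - M⁻¹ / 2 * 2)
    ((continuous_mul_log.sub (by fun_prop)).continuousOn) (fun x hx ↦ ?_) (fun x hx ↦ ?_)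
    (fun x hx ↦ ?_) <;> simp only [interior_Icc] at hx ⊢
  · exact (((hasDerivAt_mul_log hx.1.ne').sub
      ((hasDerivAt_pow 2 x).const_mul (M⁻¹ / 2))).hasDerivWithinAt).congr_deriv (by ring)
  · exact ((((hasDerivAt_log hx.1.ne').add_const 1).sub
      ((hasDerivAt_id x).const_mul 2 |>.const_mul (M⁻¹ / 2))).hasDerivWithinAt).congr_deriv
      (by simp)
  · have : M⁻¹ ≤ x⁻¹ := inv_anti₀ hx.1 hx.2.le
    linarith

theorem mul_log_mix_le {a b α : ℝ} (ha : 0 ≤ a) (hb : 0 ≤ b) (hα₀ : 0 ≤ α) (hα₁ : α ≤ 1) :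
    (α * a + (1 - α) * b) * log (α * a + (1 - α) * b) ≤
      α * (a * log a) + (1 - α) * (b * log b) - α * (1 - α) / 2 * ((a - b) ^ 2 / (a + b)) := by
  have h := (strongConvexOn_mul_log_Icc (a + b)).2 (x := a) ⟨ha, by linarith⟩ (y := b)
    ⟨hb, by linarith⟩ hα₀ (sub_nonneg.2 hα₁) (add_sub_cancel α 1)
  simp only [smul_eq_mul, Real.norm_eq_abs, sq_abs] at h
  convert h using 2
  ring

theorem sq_sum_abs_le_sum_sq_div_mul_sum {ι : Type*} [Fintype ι] {Δ s : ι → ℝ}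
    (hs : ∀ i, 0 ≤ s i) (hΔ : ∀ i, s i = 0 → Δ i = 0) :
    (∑ i, |Δ i|) ^ 2 ≤ (∑ i, Δ i ^ 2 / s i) * ∑ i, s i := by
  refine sum_sq_le_sum_mul_sum_of_sq_le_mul _ (fun i _ ↦ div_nonneg (sq_nonneg _) (hs i))
    (fun i _ ↦ hs i) fun i _ ↦ ?_
  rcases (hs i).eq_or_lt with h | h
  · simp [hΔ i h.symm]
  · rw [sq_abs, div_mul_cancel₀ _ h.ne']

section Simplex

variable {ι : Type*} [Fintype ι] {w w₁ w₂ : ι → ℝ}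

theorem neg_log_card_le_sum_mul_log (hw₀ : ∀ i, 0 ≤ w i) (hw₁ : ∑ i, w i = 1) :
    -log (Fintype.card ι) ≤ ∑ i, w i * log (w i) := by
  have hN : (0 : ℝ) < Fintype.card ι := by
    exact_mod_cast (nonempty_of_sum_ne_zero (hw₁ ▸ one_ne_zero)).card_pos
  have hJensen := convexOn_mul_log.map_sum_le (t := univ) (w := fun _ ↦ (Fintype.card ι : ℝ)⁻¹)
    (p := w) (fun _ _ ↦ by positivity) (by simp [hN.ne']) (fun i _ ↦ hw₀ i)
  simp only [smul_eq_mul, ← mul_sum, hw₁, mul_one, log_inv] at hJensen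
  exact le_of_mul_le_mul_left hJensen (inv_pos.2 hN)

theorem sum_mul_log_nonpos (hw₀ : ∀ i, 0 ≤ w i) (hw₁ : ∑ i, w i = 1) :
    ∑ i, w i * log (w i) ≤ 0 :=
  sum_nonpos fun i _ ↦ mul_log_nonpos (hw₀ i) (hw₁ ▸ single_le_sum (fun j _ ↦ hw₀ j) (mem_univ i))

theorem sum_mul_log_mix_le (hw₁₀ : ∀ i, 0 ≤ w₁ i) (hw₁₁ : ∑ i, w₁ i = 1)
    (hw₂₀ : ∀ i, 0 ≤ w₂ i) (hw₂₁ : ∑ i, w₂ i = 1) {α : ℝ} (hα₀ : 0 ≤ α) (hα₁ : α ≤ 1) :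
    ∑ i, (α * w₁ i + (1 - α) * w₂ i) * log (α * w₁ i + (1 - α) * w₂ i) ≤
      α * ∑ i, w₁ i * log (w₁ i) + (1 - α) * ∑ i, w₂ i * log (w₂ i) -
        1 / 4 * α * (1 - α) * (∑ i, |w₁ i - w₂ i|) ^ 2 := by
  have hpointwise := sum_le_sum (s := univ) fun i _ ↦ mul_log_mix_le (hw₁₀ i) (hw₂₀ i) hα₀ hα₁
  simp only [sum_sub_distrib, sum_add_distrib, ← mul_sum] at hpointwise
  have hCS := sq_sum_abs_le_sum_sq_div_mul_sum (Δ := fun i ↦ w₁ i - w₂ i)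
    (fun i ↦ add_nonneg (hw₁₀ i) (hw₂₀ i)) fun i h ↦ by linarith [hw₁₀ i, hw₂₀ i]
  rw [sum_add_distrib, hw₁₁, hw₂₁] at hCS
  linarith [mul_le_mul_of_nonneg_left hCS (mul_nonneg hα₀ (sub_nonneg.2 hα₁))]

end Simplex

section Splitting

variable {ι : Type*} [Fintype ι]

def splittingEntropies (x : ι → ℝ) : Set ℝ :=
  {t | ∃ u v : ι → ℝ, (∀ i, 0 ≤ u i) ∧ (∀ i, 0 ≤ v i) ∧ ∑ i, (u i + v i) = 1 ∧
    (∀ i, x i = u i - v i) ∧ t = ∑ i, (u i * log (u i) + v i * log (v i))}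

variable {x y : ι → ℝ} {t t₁ t₂ : ℝ}

theorem sum_comp_sumElim {M : Type*} [AddCommMonoid M] (f : ℝ → M) (u v : ι → ℝ) :
    ∑ j, f (Sum.elim u v j) = ∑ i, (f (u i) + f (v i)) := by
  simp only [Fintype.sum_sum_type, Sum.elim_inl, Sum.elim_inr, sum_add_distrib]

theorem sum_abs_le_one_of_mem_splittingEntropies (ht : t ∈ splittingEntropies x) :
    ∑ i, |x i| ≤ 1 := by
  obtain ⟨u, v, hu, hv, huv, hx, -⟩ := ht
  calc ∑ i, |x i| ≤ ∑ i, (u i + v i) := sum_le_sum fun i _ ↦ by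
        rw [hx, abs_sub_le_iff]; constructor <;> linarith [hu i, hv i]
    _ = 1 := huv

theorem neg_log_le_of_mem_splittingEntropies (ht : t ∈ splittingEntropies x) :
    -log (2 * Fintype.card ι) ≤ t := by
  obtain ⟨u, v, hu, hv, huv, -, rfl⟩ := ht
  have h := neg_log_card_le_sum_mul_log (Sum.rec hu hv) ((sum_comp_sumElim id u v).trans huv)
  rw [Fintype.card_sum, Nat.cast_add, ← two_mul] at h
  exact h.trans_eq (sum_comp_sumElim (fun s ↦ s * log s) u v)

theorem nonpos_of_mem_splittingEntropies (ht : t ∈ splittingEntropies x) : t ≤ 0 := by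
  obtain ⟨u, v, hu, hv, huv, -, rfl⟩ := ht
  exact (sum_comp_sumElim (fun s ↦ s * log s) u v).symm.trans_le
    (sum_mul_log_nonpos (Sum.rec hu hv) ((sum_comp_sumElim id u v).trans huv))

theorem neg_log_mem_splittingEntropies_zero [Nonempty ι] :
    -log (2 * Fintype.card ι) ∈ splittingEntropies (0 : ι → ℝ) := by
  refine ⟨fun _ ↦ (2 * Fintype.card ι : ℝ)⁻¹, fun _ ↦ (2 * Fintype.card ι : ℝ)⁻¹,
    fun _ ↦ by positivity, fun _ ↦ by positivity, ?_, fun _ ↦ by simp, ?_⟩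
  · simp only [sum_const, card_univ, nsmul_eq_mul]
    field_simp
    ring
  · simp only [sum_const, card_univ, nsmul_eq_mul, log_inv]
    field_simp
    ring

theorem splittingEntropies_nonempty [Nonempty ι] (hx : ∑ i, |x i| ≤ 1) :
    (splittingEntropies x).Nonempty := by
  set c := (1 - ∑ i, |x i|) / (2 * Fintype.card ι)
  have hc : 0 ≤ c := div_nonneg (sub_nonneg.2 hx) (by positivity)
  refine ⟨_, fun i ↦ (x i)⁺ + c, fun i ↦ (x i)⁻ + c, fun i ↦ add_nonneg (posPart_nonneg _) hc,
    fun i ↦ add_nonneg (negPart_nonneg _) hc, ?_, fun i ↦ by simp [posPart_sub_negPart], rfl⟩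
  calc ∑ i, ((x i)⁺ + c + ((x i)⁻ + c)) = ∑ i, |x i| + Fintype.card ι * (2 * c) := by
        simp only [← posPart_add_negPart, sum_add_distrib, sum_const, card_univ, nsmul_eq_mul]
        ring
    _ = 1 := by simp only [c]; field_simp; ring

theorem exists_mem_splittingEntropies_mix_le (h₁ : t₁ ∈ splittingEntropies x)
    (h₂ : t₂ ∈ splittingEntropies y) {α : ℝ} (hα₀ : 0 ≤ α) (hα₁ : α ≤ 1) :
    ∃ t ∈ splittingEntropies (α • x + (1 - α) • y),
      t ≤ α * t₁ + (1 - α) * t₂ - 1 / 4 * α * (1 - α) * (∑ i, |x i - y i|) ^ 2 := by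
  obtain ⟨u₁, v₁, hu₁, hv₁, huv₁, hx, rfl⟩ := h₁
  obtain ⟨u₂, v₂, hu₂, hv₂, huv₂, hy, rfl⟩ := h₂
  refine ⟨_, ⟨fun i ↦ α * u₁ i + (1 - α) * u₂ i, fun i ↦ α * v₁ i + (1 - α) * v₂ i,
    fun i ↦ by positivity [hu₁ i, hu₂ i], fun i ↦ by positivity [hv₁ i, hv₂ i], ?_,
    fun i ↦ by simp only [Pi.add_apply, Pi.smul_apply, smul_eq_mul, hx, hy]; ring, rfl⟩, ?_⟩
  · calc ∑ i, (α * u₁ i + (1 - α) * u₂ i + (α * v₁ i + (1 - α) * v₂ i))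
        = α * ∑ i, (u₁ i + v₁ i) + (1 - α) * ∑ i, (u₂ i + v₂ i) := by
          simp only [mul_sum, ← sum_add_distrib]; exact sum_congr rfl fun i _ ↦ by ring
      _ = 1 := by rw [huv₁, huv₂]; ring
  have h := sum_mul_log_mix_le (w₁ := Sum.elim u₁ v₁) (w₂ := Sum.elim u₂ v₂)
    (Sum.rec hu₁ hv₁) ((sum_comp_sumElim id u₁ v₁).trans huv₁) (Sum.rec hu₂ hv₂)
    ((sum_comp_sumElim id u₂ v₂).trans huv₂) hα₀ hα₁
  simp only [Fintype.sum_sum_type, Sum.elim_inl, Sum.elim_inr, ← sum_add_distrib] at h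
  have hxy : ∑ i, |x i - y i| ≤ ∑ i, (|u₁ i - u₂ i| + |v₁ i - v₂ i|) := sum_le_sum fun i _ ↦ by
    rw [hx, hy, sub_sub_sub_comm]; exact abs_sub _ _
  have hsq := pow_le_pow_left₀ (sum_nonneg fun i _ ↦ abs_nonneg _) hxy 2
  linarith [mul_le_mul_of_nonneg_left hsq (by positivity : 0 ≤ 1 / 4 * α * (1 - α))]

end Splitting

/-- entropy-type prox-function of the ℓ₁-ball.
`d` is defined on `B = {x : ‖x‖₁ ≤ 1}` via the entropy minimization over
decompositions `x = u − v` (the `IsLeast` hypothesis; note `t·log t = 0` at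
`t = 0`). Then `d(0) = 0`, `0 ≤ d ≤ ln(2n)` on `B`, and `d` is strongly convex
on `B` with parameter `1/2` with respect to `‖·‖₁`. -/
theorem entropy_prox_function_l1_ball
    (n : ℕ) (hn : 1 ≤ n)
    (d : (Fin n → ℝ) → ℝ)
    (hd : ∀ x : Fin n → ℝ, (∑ i, |x i|) ≤ 1 →
      IsLeast {t : ℝ | ∃ u v : Fin n → ℝ,
        (∀ i, 0 ≤ u i) ∧ (∀ i, 0 ≤ v i) ∧
        (∑ i, (u i + v i)) = 1 ∧ (∀ i, x i = u i - v i) ∧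
        t = ∑ i, (u i * Real.log (u i) + v i * Real.log (v i))}
        (d x - Real.log (2 * n))) :
    d 0 = 0 ∧
    (∀ x : Fin n → ℝ, (∑ i, |x i|) ≤ 1 → 0 ≤ d x) ∧
    (∀ x : Fin n → ℝ, (∑ i, |x i|) ≤ 1 → d x ≤ Real.log (2 * n)) ∧
    (∀ x : Fin n → ℝ, (∑ i, |x i|) ≤ 1 → ∀ y : Fin n → ℝ, (∑ i, |y i|) ≤ 1 →
      ∀ α ∈ Set.Icc (0 : ℝ) 1,
        d (α • x + (1 - α) • y) ≤
          α * d x + (1 - α) * d y -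
            (1 / 4) * α * (1 - α) * (∑ i, |x i - y i|) ^ 2) := by
  have : Nonempty (Fin n) := ⟨⟨0, hn⟩⟩
  have hmin : ∀ x : Fin n → ℝ, ∑ i, |x i| ≤ 1 →
      IsLeast (splittingEntropies x) (d x - log (2 * n)) := hd
  have hlower : ∀ x : Fin n → ℝ, ∑ i, |x i| ≤ 1 → 0 ≤ d x := fun x hx ↦ by
    have := neg_log_le_of_mem_splittingEntropies (hmin x hx).1
    rw [Fintype.card_fin] at this
    linarith
  have h0 : ∑ i, |(0 : Fin n → ℝ) i| ≤ 1 := by simp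
  refine ⟨?_, hlower, fun x hx ↦ ?_, fun x hx y hy α ⟨hα₀, hα₁⟩ ↦ ?_⟩
  · have := (hmin 0 h0).2 neg_log_mem_splittingEntropies_zero
    rw [Fintype.card_fin] at this
    linarith [hlower 0 h0]
  · obtain ⟨t, ht⟩ := splittingEntropies_nonempty hx
    linarith [(hmin x hx).2 ht, nonpos_of_mem_splittingEntropies ht]
  · obtain ⟨t, ht, hle⟩ :=
      exists_mem_splittingEntropies_mix_le (hmin x hx).1 (hmin y hy).1 hα₀ hα₁
    linarith [(hmin _ (sum_abs_le_one_of_mem_splittingEntropies ht)).2 ht]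
end
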